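/- For every m ≥ 2 and every ℓ ≥ 1, the complete homogeneous symmetric polynomial h_m(x_1,...,x_ℓ) lies in the ideal of Z[x_1,...,x_ℓ] generated by h_2(x_1), h_2(x_1,x_2), ..., h_2(x_1,...,x_ℓ). -/
import Mathlib

open MvPolynomial Finset

/-- The set of the first `j` variables among `x_0, ..., x_{n-1}`. -/
def fv (n j : ℕ) : Finset (Fin n) := Finset.univ.filter (fun i => (i : ℕ) < j)

/-- Complete homogeneous symmetric polynomial of degree `m` in the variables indexed by `S`. -/
noncomputable def hh (R : Type*) [CommRing R] (n m : ℕ) (S : Finset (Fin n)) :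
    MvPolynomial (Fin n) R :=
  ∑ s ∈ S.sym m, ((s : Multiset (Fin n)).map (X : Fin n → MvPolynomial (Fin n) R)).prod

/-- Elementary symmetric polynomial of degree `m` in the variables indexed by `S`. -/
noncomputable def ee (R : Type*) [CommRing R] (n m : ℕ) (S : Finset (Fin n)) :
    MvPolynomial (Fin n) R :=
  ∑ s ∈ S.powersetCard m, ∏ i ∈ s, X i

lemma hh_empty (R : Type*) [CommRing R] (n m : ℕ) : hh R n (m+1) (∅ : Finset (Fin n)) = 0 := by
  simp [hh, Finset.sym_empty]

lemma hh_rec (R : Type*) [CommRing R] (n m : ℕ) (a : Fin n) (S : Finset (Fin n))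
    (ha : a ∉ S) :
    hh R n (m+1) (insert a S) = X a * hh R n m (insert a S) + hh R n (m+1) S := by
  classical
  have hfilt : ((insert a S).sym (m+1)).filter (fun s => ¬ a ∈ s) = S.sym (m+1) := by
    ext s
    simp only [Finset.mem_filter, Finset.mem_sym_iff, Finset.mem_insert]
    constructor
    · rintro ⟨h1, h2⟩ b hb
      rcases h1 b hb with h | h
      · exact absurd (h ▸ hb) h2
      · exact h
    · intro h
      exact ⟨fun b hb => Or.inr (h b hb), fun hc => ha (h a hc)⟩
  have himg : ((insert a S).sym (m+1)).filter (fun s => a ∈ s) =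
      ((insert a S).sym m).image (Sym.cons a) := by
    ext s
    simp only [Finset.mem_filter, Finset.mem_image, Finset.mem_sym_iff]
    constructor
    · rintro ⟨h1, h2⟩
      refine ⟨s.erase a h2, fun b hb => h1 b ?_, Sym.cons_erase h2⟩
      rw [← Sym.mem_coe, Sym.coe_erase] at hb
      rw [← Sym.mem_coe]
      exact Multiset.mem_of_mem_erase hb
    · rintro ⟨t, ht, rfl⟩
      refine ⟨fun b hb => ?_, Sym.mem_cons_self a t⟩
      rcases Sym.mem_cons.mp hb with rfl | hb
      · exact Finset.mem_insert_self _ _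
      · exact ht b hb
  rw [hh, ← Finset.sum_filter_add_sum_filter_not ((insert a S).sym (m+1)) (fun s => a ∈ s),
    hfilt, himg, Finset.sum_image (fun x _ y _ h => (Sym.cons_inj_right a x y).mp h)]
  rw [hh, hh, Finset.mul_sum]
  congr 1
  refine Finset.sum_congr rfl fun s _ => ?_
  rw [Sym.coe_cons, Multiset.map_cons, Multiset.prod_cons]

lemma fv_succ (n k : ℕ) (hk : k < n) : fv n (k+1) = insert ⟨k, hk⟩ (fv n k) := by
  ext i
  simp only [fv, Finset.mem_filter, Finset.mem_univ, true_and, Finset.mem_insert, Fin.ext_iff]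
  omega

lemma not_mem_fv (n k : ℕ) (hk : k < n) : (⟨k, hk⟩ : Fin n) ∉ fv n k := by
  simp [fv]

/-- for `m ≥ 2`, `ℓ ≥ 1`, the complete homogeneous symmetric polynomial
`h_m(x_1,...,x_ℓ)` lies in the ideal generated by `h_2(x_1), h_2(x_1,x_2), ...,
h_2(x_1,...,x_ℓ)`. -/
theorem stmt1 (ℓ m : ℕ) (hm : 2 ≤ m) (hℓ : 1 ≤ ℓ) :
    hh ℤ ℓ m (fv ℓ ℓ) ∈
      Ideal.span {f : MvPolynomial (Fin ℓ) ℤ | ∃ j, 1 ≤ j ∧ j ≤ ℓ ∧ f = hh ℤ ℓ 2 (fv ℓ j)} := by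
  set I := Ideal.span {f : MvPolynomial (Fin ℓ) ℤ | ∃ j, 1 ≤ j ∧ j ≤ ℓ ∧ f = hh ℤ ℓ 2 (fv ℓ j)}
    with hI
  suffices h : ∀ m, 2 ≤ m → ∀ j, 1 ≤ j → j ≤ ℓ → hh ℤ ℓ m (fv ℓ j) ∈ I from
    h m hm ℓ hℓ le_rfl
  intro m hm
  induction m, hm using Nat.le_induction with
  | base => exact fun j h1 h2 => Ideal.subset_span ⟨j, h1, h2, rfl⟩
  | succ m hm ih =>
    intro j
    induction j with
    | zero => omega
    | succ k ihk =>
      intro _ h2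
      have hk : k < ℓ := by omega
      rw [fv_succ ℓ k hk, hh_rec ℤ ℓ m _ _ (not_mem_fv ℓ k hk)]
      apply add_mem
      · exact Ideal.mul_mem_left _ _ (by rw [← fv_succ ℓ k hk]; exact ih (k+1) (by omega) h2)
      · rcases Nat.eq_zero_or_pos k with rfl | hkpos
        · have : fv ℓ 0 = (∅ : Finset (Fin ℓ)) := by simp [fv]
          rw [this, hh_empty]
          exact zero_mem I
        · exact ihk hkpos (by omega)
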